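/- Let X be a geodesic metric space, P ⊆ X, and π_P satisfying (AP1) and (AP2) with constant C. Let γ be a geodesic from x to y with γ ∩ N_r(P) = {y}, for some r ≥ 2C. Then the length of γ satisfies length(γ) ≤ d(x,P) + 8r + 23C, and π_P(γ) is contained in the closed ball of radius 8r + 30C around π_P(x). -/
import Mathlib


open Metric Set

/-- `γ` restricted to `[a,b]` is a geodesic (isometric embedding of the interval). -/
def IsGeodesicOn {X : Type*} [MetricSpace X] (γ : ℝ → X) (a b : ℝ) : Prop :=
  ∀ s ∈ Set.Icc a b, ∀ t ∈ Set.Icc a b, dist (γ s) (γ t) = |s - t|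

/-- A geodesic metric space: any two points are joined by a geodesic. -/
def GeodesicSpace (X : Type*) [MetricSpace X] : Prop :=
  ∀ x y : X, ∃ γ : ℝ → X, γ 0 = x ∧ γ (dist x y) = y ∧ IsGeodesicOn γ 0 (dist x y)

section StmtSixAux

variable {X : Type*} [MetricSpace X]

/-- From (AP1): the projection is a coarse nearest-point projection. -/
lemma stmt6_proj_dist_le (Pset : Set X) (hP : Pset.Nonempty) (π : X → X) (C : ℝ)
    (hAP1 : ∀ x, ∀ p ∈ Pset, dist x (π x) + dist (π x) p - C ≤ dist x p) (z : X) :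
    dist z (π z) ≤ Metric.infDist z Pset + C := by
  by_contra hcon
  push_neg at hcon
  have h1 : Metric.infDist z Pset < dist z (π z) - C := by linarith
  obtain ⟨p, hp, hlt⟩ := (Metric.infDist_lt_iff hP).mp h1
  have h2 := hAP1 z p hp
  have h3 : (0:ℝ) ≤ dist (π z) p := dist_nonneg
  linarith

/-- From (AP2): the projection moves by at most `C` over a step of size `d(z,P)`. -/
lemma stmt6_proj_step (Pset : Set X) (hP : Pset.Nonempty) (π : X → X) (C : ℝ)
    (hAP1 : ∀ x, ∀ p ∈ Pset, dist x (π x) + dist (π x) p - C ≤ dist x p)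
    (hAP2 : ∀ x : X, Metric.diam (π '' Metric.closedBall x (Metric.infDist x Pset)) ≤ C)
    (z w : X) (h : dist z w ≤ Metric.infDist z Pset) :
    dist (π z) (π w) ≤ C := by
  have hR : 0 ≤ Metric.infDist z Pset := Metric.infDist_nonneg
  have hsub : π '' Metric.closedBall z (Metric.infDist z Pset) ⊆
      Metric.closedBall (π z) (4 * Metric.infDist z Pset + 2 * C) := by
    rintro q ⟨w', hw', rfl⟩
    rw [Metric.mem_closedBall] at hw' ⊢
    have h1 := stmt6_proj_dist_le Pset hP π C hAP1 w'
    have h3 := stmt6_proj_dist_le Pset hP π C hAP1 z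
    have h2 : Metric.infDist w' Pset ≤ Metric.infDist z Pset + dist w' z :=
      Metric.infDist_le_infDist_add_dist
    have h4 := dist_triangle4 (π w') w' z (π z)
    have h5 : dist (π w') w' = dist w' (π w') := dist_comm _ _
    linarith
  have hz : π z ∈ π '' Metric.closedBall z (Metric.infDist z Pset) :=
    ⟨z, Metric.mem_closedBall_self hR, rfl⟩
  have hw : π w ∈ π '' Metric.closedBall z (Metric.infDist z Pset) :=
    ⟨w, by rwa [Metric.mem_closedBall, dist_comm], rfl⟩
  exact le_trans
    (Metric.dist_le_diam_of_mem (Metric.isBounded_closedBall.subset hsub) hz hw) (hAP2 z)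

/-- The main quantitative estimate, for `r > 0`: a geodesic that stays at distance
more than `r` from `P` except possibly at its final endpoint `y` (which is `r`-close
to `P`) has `d(π x, π y) ≤ 7C` and length at most `d(x,P) + r + 9C`. -/
lemma stmt6_aux (Pset : Set X) (hP : Pset.Nonempty) (π : X → X) (C : ℝ) (hC : 0 ≤ C)
    (hAP1 : ∀ x, ∀ p ∈ Pset, dist x (π x) + dist (π x) p - C ≤ dist x p)
    (hAP2 : ∀ x : X, Metric.diam (π '' Metric.closedBall x (Metric.infDist x Pset)) ≤ C)
    (r : ℝ) (hr : 2 * C ≤ r) (hrpos : 0 < r)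
    (ℓ : ℝ) (hℓ : 0 ≤ ℓ) (γ : ℝ → X) (x y : X)
    (hgeo : IsGeodesicOn γ 0 ℓ) (hγ0 : γ 0 = x) (hγℓ : γ ℓ = y)
    (hy : Metric.infDist y Pset ≤ r)
    (hfar : ∀ t, 0 ≤ t → t < ℓ → r < Metric.infDist (γ t) Pset) :
    dist (π x) (π y) ≤ 7 * C ∧ ℓ ≤ Metric.infDist x Pset + r + 9 * C := by
  classical
  set A := Metric.infDist x Pset with hAdef
  have hA0 : 0 ≤ A := Metric.infDist_nonneg
  have hL : dist x y = ℓ := by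
    have h := hgeo 0 ⟨le_refl 0, hℓ⟩ ℓ ⟨hℓ, le_refl ℓ⟩
    rw [hγ0, hγℓ] at h
    rw [h, zero_sub, abs_neg, abs_of_nonneg hℓ]
  have hdist0 : ∀ u, 0 ≤ u → u ≤ ℓ → dist x (γ u) = u := by
    intro u h0 h1
    have h := hgeo 0 ⟨le_refl 0, hℓ⟩ u ⟨h0, h1⟩
    rw [hγ0] at h
    rw [h, zero_sub, abs_neg, abs_of_nonneg h0]
  have hdistuv : ∀ u v, 0 ≤ u → u ≤ v → v ≤ ℓ → dist (γ u) (γ v) = v - u := by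
    intro u v h0 huv hv
    have h := hgeo u ⟨h0, le_trans huv hv⟩ v ⟨le_trans h0 huv, hv⟩
    rw [h, abs_sub_comm, abs_of_nonneg (by linarith)]
  -- the chain of projections along the geodesic
  have chain : ∀ i : ℕ,
      dist (π x) (π (γ (min (A + (i : ℝ) * r) ℓ))) ≤ ((i : ℝ) + 1) * C := by
    intro i
    induction i with
    | zero =>
      simp only [Nat.cast_zero, zero_mul, add_zero, zero_add, one_mul]
      have h0 : 0 ≤ min A ℓ := le_min hA0 hℓ
      have h1 : min A ℓ ≤ ℓ := min_le_right _ _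
      have h2 : dist x (γ (min A ℓ)) = min A ℓ := hdist0 _ h0 h1
      exact stmt6_proj_step Pset hP π C hAP1 hAP2 x (γ (min A ℓ))
        (by rw [h2]; exact min_le_left _ _)
    | succ k ih =>
      push_cast
      set u := min (A + (k : ℝ) * r) ℓ with hu
      set v := min (A + ((k : ℝ) + 1) * r) ℓ with hv
      have hk0 : (0:ℝ) ≤ (k : ℝ) := Nat.cast_nonneg k
      have hu0 : 0 ≤ u := le_min (by nlinarith) hℓ
      have huv : u ≤ v := min_le_min (by nlinarith) (le_refl ℓ)
      have hvℓ : v ≤ ℓ := min_le_right _ _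
      have hjump : dist (π (γ u)) (π (γ v)) ≤ C := by
        rcases le_or_gt ℓ (A + (k : ℝ) * r) with hcase | hcase
        · have h1 : u = ℓ := min_eq_right hcase
          have h2 : v = ℓ := min_eq_right (by nlinarith)
          rw [h1, h2, dist_self]
          exact hC
        · have h1 : u = A + (k : ℝ) * r := min_eq_left hcase.le
          have huℓ : u < ℓ := by rw [h1]; exact hcase
          have hd : dist (γ u) (γ v) = v - u := hdistuv u v hu0 huv hvℓ
          apply stmt6_proj_step Pset hP π C hAP1 hAP2 (γ u) (γ v)
          rw [hd]
          have h2 : v ≤ A + ((k : ℝ) + 1) * r := min_le_left _ _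
          have h3 : r < Metric.infDist (γ u) Pset := hfar u hu0 huℓ
          nlinarith
      calc dist (π x) (π (γ v))
          ≤ dist (π x) (π (γ u)) + dist (π (γ u)) (π (γ v)) := dist_triangle _ _ _
        _ ≤ ((k : ℝ) + 1) * C + C := add_le_add ih hjump
        _ = ((k : ℝ) + 1 + 1) * C := by ring
  -- the chain terminates
  have hex : ∃ i : ℕ, ℓ ≤ A + (i : ℝ) * r := by
    obtain ⟨i, hi⟩ := exists_nat_ge ((ℓ - A) / r)
    refine ⟨i, ?_⟩
    rw [div_le_iff₀ hrpos] at hi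
    linarith
  obtain ⟨n, hspec, hmin⟩ : ∃ n : ℕ, ℓ ≤ A + (n : ℝ) * r ∧
      ∀ m : ℕ, m < n → A + (m : ℝ) * r < ℓ := by
    refine ⟨Nat.find hex, Nat.find_spec hex, fun m hm => ?_⟩
    exact not_le.mp (Nat.find_min hex hm)
  have hchainn := chain n
  rw [min_eq_right hspec, hγℓ] at hchainn
  have hdyπ : dist y (π y) ≤ r + C := by
    have := stmt6_proj_dist_le Pset hP π C hAP1 y
    linarith
  have hdxπ : dist x (π x) ≤ A + C := stmt6_proj_dist_le Pset hP π C hAP1 x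
  have htri : ℓ ≤ A + r + ((n : ℝ) + 3) * C := by
    have h4 := dist_triangle4 x (π x) (π y) y
    rw [hL] at h4
    have h5 : dist (π y) y = dist y (π y) := dist_comm _ _
    nlinarith
  have hn6 : (n : ℝ) ≤ 6 := by
    by_contra hbig
    push_neg at hbig
    have h6 : 6 < n := by exact_mod_cast hbig
    have h7 : 7 ≤ n := h6
    have h7r : (7:ℝ) ≤ (n : ℝ) := by exact_mod_cast h7
    have hm := hmin (n - 1) (Nat.sub_lt (by omega) one_pos)
    have hc : ((n - 1 : ℕ) : ℝ) = (n : ℝ) - 1 := by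
      rw [Nat.cast_sub (by omega : 1 ≤ n), Nat.cast_one]
    rw [hc] at hm
    nlinarith [mul_nonneg (sub_nonneg.mpr h7r) hrpos.le,
      mul_le_mul_of_nonneg_left hr (show (0:ℝ) ≤ (n : ℝ) + 3 by linarith)]
  constructor
  · nlinarith [mul_nonneg (sub_nonneg.mpr hn6) hC]
  · nlinarith [mul_nonneg (sub_nonneg.mpr hn6) hC]

end StmtSixAux

/-- if a geodesic `γ` from `x` to `y` meets `N_r(P)` (`r ≥ 2C`) only in
its endpoint `y`, then its length is at most `d(x,P) + 8r + 23C` and `π_P(γ)` is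
contained in the closed ball of radius `8r + 30C` around `π_P x`. -/
theorem stmt6 {X : Type*} [MetricSpace X] (hX : GeodesicSpace X)
    (Pset : Set X) (hP : Pset.Nonempty) (π : X → X) (C : ℝ) (hC : 0 ≤ C)
    (hmaps : ∀ x, π x ∈ Pset)
    (hAP1 : ∀ x, ∀ p ∈ Pset, dist x (π x) + dist (π x) p - C ≤ dist x p)
    (hAP2 : ∀ x : X, Metric.diam (π '' Metric.closedBall x (Metric.infDist x Pset)) ≤ C)
    (r : ℝ) (hr : 2 * C ≤ r)
    (ℓ : ℝ) (hℓ : 0 ≤ ℓ) (γ : ℝ → X) (x y : X)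
    (hgeo : IsGeodesicOn γ 0 ℓ) (hγ0 : γ 0 = x) (hγℓ : γ ℓ = y)
    (hy : Metric.infDist y Pset ≤ r)
    (honly : ∀ t ∈ Set.Icc 0 ℓ, Metric.infDist (γ t) Pset ≤ r → γ t = y) :
    ℓ ≤ Metric.infDist x Pset + 8 * r + 23 * C ∧
      ∀ t ∈ Set.Icc 0 ℓ, dist (π (γ t)) (π x) ≤ 8 * r + 30 * C := by
  classical
  have hr0 : (0:ℝ) ≤ r := by linarith
  have hfar : ∀ t, 0 ≤ t → t < ℓ → r < Metric.infDist (γ t) Pset := by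
    intro t ht0 htl
    by_contra hcon
    push_neg at hcon
    have hty := honly t ⟨ht0, htl.le⟩ hcon
    have h := hgeo t ⟨ht0, htl.le⟩ ℓ ⟨hℓ, le_refl ℓ⟩
    rw [hty, hγℓ, dist_self] at h
    have h0 : t - ℓ = 0 := abs_eq_zero.mp h.symm
    linarith
  have hLxy : dist x y = ℓ := by
    have h := hgeo 0 ⟨le_refl 0, hℓ⟩ ℓ ⟨hℓ, le_refl ℓ⟩
    rw [hγ0, hγℓ] at h
    rw [h, zero_sub, abs_neg, abs_of_nonneg hℓ]
  rcases lt_or_eq_of_le hr0 with hrpos | hrzero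
  · -- case `r > 0`
    obtain ⟨h1, h2⟩ := stmt6_aux Pset hP π C hC hAP1 hAP2 r hr hrpos ℓ hℓ γ x y
      hgeo hγ0 hγℓ hy hfar
    constructor
    · linarith
    · intro t ht
      have htℓ : 0 ≤ ℓ - t := by linarith [ht.2]
      have hσgeo : IsGeodesicOn (fun s => γ (t + s)) 0 (ℓ - t) := by
        intro s hs s' hs'
        have h := hgeo (t + s) ⟨by linarith [ht.1, hs.1], by linarith [hs.2]⟩
          (t + s') ⟨by linarith [ht.1, hs'.1], by linarith [hs'.2]⟩
        simpa [add_sub_add_left_eq_sub] using h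
      have hσ0 : (fun s => γ (t + s)) 0 = γ t := by simp
      have hσℓ : (fun s => γ (t + s)) (ℓ - t) = y := by
        show γ (t + (ℓ - t)) = y
        rw [show t + (ℓ - t) = ℓ by ring, hγℓ]
      have hσfar : ∀ s, 0 ≤ s → s < ℓ - t →
          r < Metric.infDist ((fun s => γ (t + s)) s) Pset := by
        intro s hs0 hsl
        exact hfar (t + s) (by linarith [ht.1]) (by linarith)
      obtain ⟨h3, _⟩ := stmt6_aux Pset hP π C hC hAP1 hAP2 r hr hrpos (ℓ - t) htℓ
        (fun s => γ (t + s)) (γ t) y hσgeo hσ0 hσℓ hy hσfar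
      calc dist (π (γ t)) (π x)
          ≤ dist (π (γ t)) (π y) + dist (π y) (π x) := dist_triangle _ _ _
        _ ≤ 7 * C + 7 * C := add_le_add h3 (by rw [dist_comm]; exact h1)
        _ ≤ 8 * r + 30 * C := by linarith
  · -- case `r = 0`, hence `C = 0`
    have hC0 : C = 0 := by linarith
    subst hC0
    subst hrzero
    have hky : Metric.infDist y Pset = 0 := le_antisymm hy Metric.infDist_nonneg
    have hkey : ∀ T, 0 ≤ T → T < ℓ → π (γ T) = π x := by
      intro T hT0 hTl
      set S := {s : ℝ | s ∈ Set.Icc 0 T ∧ π (γ s) = π x} with hS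
      have h0S : (0:ℝ) ∈ S := ⟨⟨le_refl 0, hT0⟩, by rw [hγ0]⟩
      have hne : S.Nonempty := ⟨0, h0S⟩
      have hbdd : BddAbove S := ⟨T, fun s hs => hs.1.2⟩
      set u := sSup S with husup
      have hu0 : 0 ≤ u := le_csSup hbdd h0S
      have huT : u ≤ T := csSup_le hne (fun s hs => hs.1.2)
      have huℓ : u < ℓ := lt_of_le_of_lt huT hTl
      have hau : 0 < Metric.infDist (γ u) Pset := hfar u hu0 huℓ
      have hπu : π (γ u) = π x := by
        obtain ⟨s, hsS, hs⟩ := exists_lt_of_lt_csSup hne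
          (show u - Metric.infDist (γ u) Pset < u by linarith)
        have hsu : s ≤ u := le_csSup hbdd hsS
        have hd : dist (γ u) (γ s) = u - s := by
          have h := hgeo u ⟨hu0, huℓ.le⟩ s ⟨hsS.1.1, by linarith [hsS.1.2]⟩
          rw [h, abs_of_nonneg (by linarith)]
        have hj := stmt6_proj_step Pset hP π 0 hAP1 hAP2 (γ u) (γ s)
          (by rw [hd]; linarith)
        have heq : π (γ u) = π (γ s) := by
          have h0 := le_antisymm hj dist_nonneg
          rwa [dist_eq_zero] at h0
        rw [heq, hsS.2]
      have huTeq : u = T := by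
        by_contra hneq
        have hlt : u < T := lt_of_le_of_ne huT hneq
        have hvdef : u < min T (u + Metric.infDist (γ u) Pset) := lt_min hlt (by linarith)
        set v := min T (u + Metric.infDist (γ u) Pset) with hv
        have hvT : v ≤ T := min_le_left _ _
        have hvS : v ∈ S := by
          refine ⟨⟨by linarith, hvT⟩, ?_⟩
          have hd : dist (γ u) (γ v) = v - u := by
            have h := hgeo u ⟨hu0, huℓ.le⟩ v ⟨by linarith, by linarith⟩
            rw [h, abs_sub_comm, abs_of_nonneg (by linarith)]
          have hj := stmt6_proj_step Pset hP π 0 hAP1 hAP2 (γ u) (γ v)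
            (by rw [hd]; have := min_le_right T (u + Metric.infDist (γ u) Pset); linarith)
          have heq : π (γ u) = π (γ v) := by
            have h0 := le_antisymm hj dist_nonneg
            rwa [dist_eq_zero] at h0
          rw [← heq, hπu]
        exact absurd (le_csSup hbdd hvS) (not_le.mpr hvdef)
      rw [← huTeq]
      exact hπu
    have hπy : π y = y := by
      have h1 := stmt6_proj_dist_le Pset hP π 0 hAP1 y
      rw [hky] at h1
      have h2 : dist y (π y) = 0 := le_antisymm (by linarith) dist_nonneg
      rw [dist_eq_zero] at h2
      exact h2.symm
    rcases eq_or_lt_of_le hℓ with hl0 | hlpos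
    · constructor
      · have := Metric.infDist_nonneg (x := x) (s := Pset)
        linarith
      · intro t ht
        rw [← hl0] at ht
        have ht0 : t = 0 := le_antisymm ht.2 ht.1
        rw [ht0, hγ0, dist_self]
        norm_num
    · -- `0 < ℓ`
      have hyx : y = π x := by
        have hd : ∀ ε : ℝ, 0 < ε → dist (π x) y ≤ 0 + ε := by
          intro ε hε
          set t := max 0 (ℓ - ε / 2) with htdef
          have ht0 : 0 ≤ t := le_max_left _ _
          have htl : t < ℓ := max_lt hlpos (by linarith)
          have hπt := hkey t ht0 htl
          have h1 := stmt6_proj_dist_le Pset hP π 0 hAP1 (γ t)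
          have h2 : Metric.infDist (γ t) Pset ≤ Metric.infDist y Pset + dist (γ t) y :=
            Metric.infDist_le_infDist_add_dist
          have h3 : dist (γ t) y = ℓ - t := by
            have h := hgeo t ⟨ht0, htl.le⟩ ℓ ⟨hℓ, le_refl ℓ⟩
            rw [hγℓ] at h
            rw [h, abs_sub_comm, abs_of_nonneg (by linarith)]
          have h4 : ℓ - t ≤ ε / 2 := by
            have := le_max_right 0 (ℓ - ε / 2)
            linarith
          have htri := dist_triangle (π x) (γ t) y
          have hcomm : dist (π x) (γ t) = dist (γ t) (π (γ t)) := by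
            rw [← hπt, dist_comm]
          rw [hky] at h2
          linarith
        have h0 : dist (π x) y ≤ 0 := le_of_forall_pos_le_add hd
        have h1 : dist (π x) y = 0 := le_antisymm h0 dist_nonneg
        rw [dist_eq_zero] at h1
        exact h1.symm
      constructor
      · have h1 := stmt6_proj_dist_le Pset hP π 0 hAP1 x
        rw [← hLxy, hyx]
        linarith
      · intro t ht
        rcases eq_or_lt_of_le ht.2 with h | h
        · rw [h, hγℓ, hπy, hyx, dist_self]
          norm_num
        · rw [hkey t ht.1 h, dist_self]
          norm_num
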